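/- Let B be a directed graph with no isolated vertices and with no homomorphism to K2→ (the directed graph with two vertices and a single directed edge). Then there exists λ₀ ∈ [0,1] such that t(B, W^{(λ₀)}) = (1/16)^{e(B)} = t(K2→, W^{(λ₀)})^{e(B)}. -/

import Mathlib

open MeasureTheory Filter Topology

/-- Homomorphism density between finite directed graphs: the number of maps
`V(A) → V(G)` that are homomorphisms, divided by `v(G)^{v(A)}`. -/
noncomputable def homDensity {α β : Type} [Fintype α] [Fintype β]
    (A : α → α → Prop) (G : β → β → Prop) : ℝ :=
  (Nat.card {f : α → β // ∀ x y, A x y → G (f x) (f y)} : ℝ) /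
    (Fintype.card β : ℝ) ^ (Fintype.card α)

/-- Number of edges of a directed graph. -/
noncomputable def edgeCount {α : Type} [Fintype α] (A : α → α → Prop) : ℕ :=
  Nat.card {p : α × α // A p.1 p.2}

/-- The oriented graph `K2→`: two vertices, one directed edge. -/
def K2dir : Fin 2 → Fin 2 → Prop := fun i j => i = 0 ∧ j = 1

/-- A directed graph is an oriented graph: no self-loops and, for each pair of
distinct vertices, at most one of the two possible directed edges. -/
def IsOriented {α : Type} (A : α → α → Prop) : Prop :=
  (∀ x, ¬ A x x) ∧ ∀ x y, A x y → ¬ A y x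

open Classical in
/-- Graphon homomorphism density of a directed graph `A` in `W`:
`t(A, W) = ∫_{[0,1]^{V(A)}} ∏_{(i,j) ∈ E(A)} W(x_i, x_j) ∏ dx_i`. -/
noncomputable def graphonDensity {α : Type} [Fintype α]
    (A : α → α → Prop) (W : ℝ → ℝ → ℝ) : ℝ :=
  ∫ x : α → ℝ in Set.univ.pi fun _ => Set.Icc (0:ℝ) 1,
    ∏ p : α × α, if A p.1 p.2 then W (x p.1) (x p.2) else 1

open Classical in
/-- The graphon `W^{(λ)}`: equal to `1 − λ` on `[1/4,1/2] × [0,1/4]`, to `λ/4` on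
`[1/2,1] × [1/2,1]`, and `0` otherwise. -/
noncomputable def Wlam (l : ℝ) : ℝ → ℝ → ℝ := fun x y =>
  if x ∈ Set.Icc (1/4 : ℝ) (1/2) ∧ y ∈ Set.Icc (0 : ℝ) (1/4) then 1 - l
  else if x ∈ Set.Icc (1/2 : ℝ) 1 ∧ y ∈ Set.Icc (1/2 : ℝ) 1 then l/4
  else 0

/-! ### Auxiliary lemmas -/

/-- Clamp of a real number to `[0,1]`. -/
noncomputable def projI (l : ℝ) : ℝ := max 0 (min l 1)

lemma projI_mem (l : ℝ) : projI l ∈ Set.Icc (0:ℝ) 1 := by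
  constructor
  · exact le_max_left _ _
  · exact max_le (by norm_num) (min_le_right _ _)

lemma projI_eq {l : ℝ} (hl : l ∈ Set.Icc (0:ℝ) 1) : projI l = l := by
  unfold projI
  rw [min_eq_left hl.2, max_eq_right hl.1]

lemma continuous_projI : Continuous projI := by
  unfold projI; fun_prop

lemma Wlam_mem {c : ℝ} (hc : c ∈ Set.Icc (0:ℝ) 1) (a b : ℝ) :
    Wlam c a b ∈ Set.Icc (0:ℝ) 1 := by
  obtain ⟨h0, h1⟩ := hc
  unfold Wlam
  split_ifs <;> constructor <;> linarith

lemma measurable_Wlam (c : ℝ) : Measurable fun q : ℝ × ℝ => Wlam c q.1 q.2 := by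
  unfold Wlam
  have h1 : MeasurableSet {q : ℝ × ℝ |
      q.1 ∈ Set.Icc (1/4 : ℝ) (1/2) ∧ q.2 ∈ Set.Icc (0 : ℝ) (1/4)} :=
    measurableSet_Icc.prod measurableSet_Icc
  have h2 : MeasurableSet {q : ℝ × ℝ |
      q.1 ∈ Set.Icc (1/2 : ℝ) 1 ∧ q.2 ∈ Set.Icc (1/2 : ℝ) 1} :=
    measurableSet_Icc.prod measurableSet_Icc
  exact Measurable.ite h1 measurable_const
    (Measurable.ite h2 measurable_const measurable_const)

lemma continuous_Wlam (a b : ℝ) : Continuous fun c : ℝ => Wlam c a b := by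
  unfold Wlam
  by_cases h1 : a ∈ Set.Icc (1/4 : ℝ) (1/2) ∧ b ∈ Set.Icc (0 : ℝ) (1/4)
  · simp only [if_pos h1]; fun_prop
  · simp only [if_neg h1]
    by_cases h2 : a ∈ Set.Icc (1/2 : ℝ) 1 ∧ b ∈ Set.Icc (1/2 : ℝ) 1
    · simp only [if_pos h2]; fun_prop
    · simp only [if_neg h2]; fun_prop

open Classical in
/-- The integrand of `graphonDensity B (Wlam (projI l))`. -/
noncomputable def Fint {β : Type} [Fintype β] (B : β → β → Prop) (l : ℝ) (x : β → ℝ) : ℝ :=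
  ∏ p : β × β, if B p.1 p.2 then Wlam (projI l) (x p.1) (x p.2) else 1

variable {β : Type} [Fintype β] (B : β → β → Prop)

lemma Fint_nonneg (l : ℝ) (x : β → ℝ) : 0 ≤ Fint B l x := by
  classical
  refine Finset.prod_nonneg fun p _ => ?_
  split_ifs with hp
  · exact (Wlam_mem (projI_mem l) _ _).1
  · norm_num

lemma Fint_le_one (l : ℝ) (x : β → ℝ) : Fint B l x ≤ 1 := by
  classical
  refine Finset.prod_le_one (fun p _ => ?_) (fun p _ => ?_)
  · split_ifs with hp
    · exact (Wlam_mem (projI_mem l) _ _).1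
    · norm_num
  · split_ifs with hp
    · exact (Wlam_mem (projI_mem l) _ _).2
    · norm_num

lemma Fint_measurable (l : ℝ) : Measurable (Fint B l) := by
  classical
  unfold Fint
  refine Finset.measurable_prod _ fun p _ => ?_
  by_cases hp : B p.1 p.2
  · simp only [if_pos hp]
    have hm : Measurable fun x : β → ℝ => (x p.1, x p.2) :=
      (measurable_pi_apply _).prodMk (measurable_pi_apply _)
    exact (measurable_Wlam (projI l)).comp hm
  · simp only [if_neg hp]; exact measurable_const

lemma Fint_continuous (x : β → ℝ) : Continuous fun l => Fint B l x := by
  classical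
  unfold Fint
  refine continuous_finset_prod _ fun p _ => ?_
  by_cases hp : B p.1 p.2
  · simp only [if_pos hp]
    exact (continuous_Wlam (x p.1) (x p.2)).comp continuous_projI
  · simp only [if_neg hp]; exact continuous_const

lemma K2_density (l : ℝ) : graphonDensity K2dir (Wlam l) = 1/16 := by
  classical
  unfold graphonDensity
  set S2 : Set (Fin 2 → ℝ) := Set.univ.pi fun _ => Set.Icc (0:ℝ) 1 with hS2def
  have hS2 : MeasurableSet S2 := MeasurableSet.univ_pi fun _ => measurableSet_Icc
  have hS2vol : volume S2 = 1 := by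
    rw [hS2def, volume_pi_pi]
    simp [Real.volume_Icc]
  have hS2fin : volume S2 < ⊤ := by rw [hS2vol]; exact ENNReal.one_lt_top
  set P1 : Set (Fin 2 → ℝ) :=
    Set.univ.pi fun i => if i = 0 then Set.Icc (1/4:ℝ) (1/2) else Set.Icc (0:ℝ) (1/4) with hP1def
  set P2 : Set (Fin 2 → ℝ) := Set.univ.pi fun _ => Set.Icc (1/2:ℝ) 1 with hP2def
  have hP1m : MeasurableSet P1 := MeasurableSet.univ_pi fun i => by
    split_ifs <;> exact measurableSet_Icc
  have hP2m : MeasurableSet P2 := MeasurableSet.univ_pi fun _ => measurableSet_Icc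
  have hprod : ∀ x : Fin 2 → ℝ,
      (∏ p : Fin 2 × Fin 2, if K2dir p.1 p.2 then Wlam l (x p.1) (x p.2) else 1)
        = (1 - l) * P1.indicator (fun _ => (1:ℝ)) x
          + (l/4) * P2.indicator (fun _ => (1:ℝ)) x := by
    intro x
    rw [Fintype.prod_prod_type]
    rw [Fin.prod_univ_two]
    rw [Fin.prod_univ_two, Fin.prod_univ_two]
    have e1 : ¬ K2dir 0 0 := by simp [K2dir]
    have e2 : K2dir 0 1 := by simp [K2dir]
    have e3 : ¬ K2dir 1 0 := by simp [K2dir]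
    have e4 : ¬ K2dir 1 1 := by simp [K2dir]
    rw [if_neg e1, if_pos e2, if_neg e3, if_neg e4]
    ring_nf
    rw [Set.indicator_apply, Set.indicator_apply]
    have hmem1 : x ∈ P1 ↔ x 0 ∈ Set.Icc (1/4:ℝ) (1/2) ∧ x 1 ∈ Set.Icc (0:ℝ) (1/4) := by
      rw [hP1def, Set.mem_univ_pi]
      rw [Fin.forall_fin_two]
      simp
    have hmem2 : x ∈ P2 ↔ x 0 ∈ Set.Icc (1/2:ℝ) 1 ∧ x 1 ∈ Set.Icc (1/2:ℝ) 1 := by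
      rw [hP2def, Set.mem_univ_pi]
      rw [Fin.forall_fin_two]
    unfold Wlam
    by_cases h1 : x 0 ∈ Set.Icc (1/4:ℝ) (1/2) ∧ x 1 ∈ Set.Icc (0:ℝ) (1/4)
    · have h2 : ¬ (x 0 ∈ Set.Icc (1/2:ℝ) 1 ∧ x 1 ∈ Set.Icc (1/2:ℝ) 1) := by
        rintro ⟨-, hb⟩
        have := h1.2.2
        have := hb.1
        norm_num at *
        linarith
      rw [if_pos h1, if_pos (hmem1.2 h1), if_neg (fun hx => h2 (hmem2.1 hx))]
      ring
    · rw [if_neg h1, if_neg (fun hx => h1 (hmem1.1 hx))]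
      by_cases h2 : x 0 ∈ Set.Icc (1/2:ℝ) 1 ∧ x 1 ∈ Set.Icc (1/2:ℝ) 1
      · rw [if_pos h2, if_pos (hmem2.2 h2)]; ring
      · rw [if_neg h2, if_neg (fun hx => h2 (hmem2.1 hx))]; ring
  simp only [hprod]
  have hi1 : Integrable (P1.indicator fun _ => (1:ℝ)) (volume.restrict S2) :=
    (integrableOn_const hS2fin.ne).indicator hP1m
  have hi2 : Integrable (P2.indicator fun _ => (1:ℝ)) (volume.restrict S2) :=
    (integrableOn_const hS2fin.ne).indicator hP2m
  rw [integral_add (hi1.const_mul _) (hi2.const_mul _), integral_const_mul, integral_const_mul]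
  rw [setIntegral_indicator hP1m, setIntegral_indicator hP2m,
    setIntegral_const, setIntegral_const]
  have hsub1 : P1 ⊆ S2 := by
    rw [hP1def, hS2def]
    refine Set.pi_mono fun i _ => ?_
    split_ifs <;> intro y hy <;> exact ⟨by linarith [hy.1], by linarith [hy.2]⟩
  have hsub2 : P2 ⊆ S2 := by
    rw [hP2def, hS2def]
    refine Set.pi_mono fun i _ => ?_
    intro y hy; exact ⟨by linarith [hy.1], by linarith [hy.2]⟩
  rw [Set.inter_eq_self_of_subset_right hsub1, Set.inter_eq_self_of_subset_right hsub2]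
  have hv1 : volume P1 = ENNReal.ofReal (1/16) := by
    rw [hP1def, volume_pi_pi, Fin.prod_univ_two]
    norm_num [Real.volume_Icc, ← ENNReal.ofReal_mul]
  have hv2 : volume P2 = ENNReal.ofReal (1/4) := by
    rw [hP2def, volume_pi_pi, Fin.prod_univ_two]
    norm_num [Real.volume_Icc, ← ENNReal.ofReal_mul]
  rw [measureReal_def, measureReal_def, hv1, hv2, ENNReal.toReal_ofReal (by norm_num), ENNReal.toReal_ofReal (by norm_num)]
  simp
  ring


/-- If a directed graph `B` has no isolated vertices and no
homomorphism to `K2→`, then there exists `λ₀ ∈ [0,1]` with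
`t(B, W^{(λ₀)}) = (1/16)^{e(B)} = t(K2→, W^{(λ₀)})^{e(B)}`. -/
theorem exists_lambda_density_eq {β : Type} [Fintype β] (B : β → β → Prop)
    (hiso : ∀ v : β, ∃ u : β, B v u ∨ B u v)
    (h : ¬ ∃ f : β → Fin 2, ∀ x y, B x y → K2dir (f x) (f y)) :
    ∃ l ∈ Set.Icc (0:ℝ) 1,
      graphonDensity B (Wlam l) = (1/16 : ℝ) ^ edgeCount B ∧
      (1/16 : ℝ) ^ edgeCount B = graphonDensity K2dir (Wlam l) ^ edgeCount B := by
  classical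
  set S : Set (β → ℝ) := Set.univ.pi fun _ => Set.Icc (0:ℝ) 1 with hSdef
  have hS : MeasurableSet S := MeasurableSet.univ_pi fun _ => measurableSet_Icc
  have hSvol : volume S = 1 := by
    rw [hSdef, volume_pi_pi]; simp [Real.volume_Icc]
  have hSfin : volume S < ⊤ := by rw [hSvol]; exact ENNReal.one_lt_top
  set g : ℝ → ℝ := fun l => ∫ x in S, Fint B l x with hgdef
  have hmeas : ∀ l : ℝ, AEStronglyMeasurable (Fint B l) (volume.restrict S) :=
    fun l => (Fint_measurable B l).aestronglyMeasurable
  have hbd : ∀ l : ℝ, ∀ᵐ x ∂(volume.restrict S), ‖Fint B l x‖ ≤ (1:ℝ) :=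
    fun l => Filter.Eventually.of_forall fun x => by
      rw [Real.norm_eq_abs, abs_of_nonneg (Fint_nonneg B l x)]
      exact Fint_le_one B l x
  have hIntF : ∀ l : ℝ, IntegrableOn (Fint B l) S volume := fun l =>
    Integrable.mono' (integrableOn_const hSfin.ne) (hmeas l) (hbd l)
  have hgcont : Continuous g :=
    continuous_of_dominated hmeas hbd (integrableOn_const hSfin.ne)
      (Filter.Eventually.of_forall fun x => Fint_continuous B x)
  -- value at 0
  have h0mem : (0:ℝ) ∈ Set.Icc (0:ℝ) 1 := ⟨le_refl 0, by norm_num⟩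
  have h1mem : (1:ℝ) ∈ Set.Icc (0:ℝ) 1 := ⟨by norm_num, le_refl 1⟩
  have hzero : Fint B 0 =ᵐ[volume.restrict S] (fun _ => (0:ℝ)) := by
    refine (ae_restrict_iff' hS).mpr ?_
    rw [ae_iff]
    refine measure_mono_null ?_
      (measure_iUnion_null fun v : β =>
        show volume (Set.univ.pi fun i =>
          if i = v then ({(1/4:ℝ)} : Set ℝ) else Set.Icc (0:ℝ) 1) = 0 from by
        rw [volume_pi_pi]
        refine Finset.prod_eq_zero (Finset.mem_univ v) ?_
        simp)
    intro x hx
    simp only [Set.mem_setOf_eq] at hx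
    push_neg at hx
    obtain ⟨hxS, hxF⟩ := hx
    by_contra hnx
    simp only [Set.mem_iUnion, not_exists] at hnx
    have hne : ∀ v, x v ≠ 1/4 := by
      intro v hv
      refine hnx v ?_
      rw [Set.mem_univ_pi]
      intro i
      split_ifs with hi
      · subst hi; simpa using hv
      · rw [hSdef, Set.mem_univ_pi] at hxS
        exact hxS i
    have hxF' : (∏ p : β × β,
        if B p.1 p.2 then Wlam 0 (x p.1) (x p.2) else 1) ≠ 0 := by
      unfold Fint at hxF
      rwa [projI_eq h0mem] at hxF
    have hfac : ∀ p : β × β, B p.1 p.2 →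
        x p.1 ∈ Set.Icc (1/4:ℝ) (1/2) ∧ x p.2 ∈ Set.Icc (0:ℝ) (1/4) := by
      intro p hp
      have hfp := Finset.prod_ne_zero_iff.1 hxF' p (Finset.mem_univ p)
      rw [if_pos hp] at hfp
      by_contra hc
      unfold Wlam at hfp
      rw [if_neg hc] at hfp
      split_ifs at hfp <;> simp at hfp
    refine h ⟨fun v => if x v ≤ 1/4 then 1 else 0, ?_⟩
    intro a b hab
    obtain ⟨ha, hb⟩ := hfac (a, b) hab
    have hagt : ¬ (x a ≤ 1/4) :=
      not_le.mpr (lt_of_le_of_ne ha.1 (Ne.symm (hne a)))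
    constructor
    · show (if x a ≤ 1/4 then (1:Fin 2) else 0) = 0
      rw [if_neg hagt]
    · show (if x b ≤ 1/4 then (1:Fin 2) else 0) = 1
      rw [if_pos hb.2]
  have hg0 : g 0 = 0 := integral_eq_zero_of_ae hzero
  -- no isolated vertices gives `card β ≤ 2 e`
  have hcard : Fintype.card β ≤ 2 * edgeCount B := by
    unfold edgeCount
    choose u hu using hiso
    have hinj : Function.Injective (fun w : β =>
        if hw : B w (u w) then ((⟨(w, u w), hw⟩ : {p : β × β // B p.1 p.2}), true)
        else ((⟨(u w, w), (hu w).resolve_left hw⟩ : {p : β × β // B p.1 p.2}), false)) := by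
      intro a b hab
      dsimp only at hab
      by_cases ha : B a (u a) <;> by_cases hb : B b (u b)
      · rw [dif_pos ha, dif_pos hb] at hab
        exact congrArg (fun z => z.1.1.1) hab
      · rw [dif_pos ha, dif_neg hb] at hab
        exact absurd (congrArg Prod.snd hab) (by simp)
      · rw [dif_neg ha, dif_pos hb] at hab
        exact absurd (congrArg Prod.snd hab) (by simp)
      · rw [dif_neg ha, dif_neg hb] at hab
        exact congrArg (fun z => z.1.1.2) hab
    calc Fintype.card β = Nat.card β := (Nat.card_eq_fintype_card).symm
      _ ≤ Nat.card ({p : β × β // B p.1 p.2} × Bool) :=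
          Nat.card_le_card_of_injective _ hinj
      _ = Nat.card {p : β × β // B p.1 p.2} * 2 := by
          rw [Nat.card_prod]; simp [Nat.card_eq_fintype_card]
      _ = 2 * Nat.card {p : β × β // B p.1 p.2} := mul_comm _ _
  -- value at 1
  have hg1 : ((1:ℝ)/16) ^ edgeCount B ≤ g 1 := by
    set T : Set (β → ℝ) := Set.univ.pi fun _ => Set.Icc (1/2:ℝ) 1 with hTdef
    have hTm : MeasurableSet T := MeasurableSet.univ_pi fun _ => measurableSet_Icc
    have hTsub : T ⊆ S := by
      rw [hTdef, hSdef]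
      refine Set.pi_mono fun i _ => ?_
      intro y hy; exact ⟨by linarith [hy.1], by linarith [hy.2]⟩
    have hTvol : volume T = ENNReal.ofReal (1/2) ^ Fintype.card β := by
      rw [hTdef, volume_pi_pi]
      simp [Real.volume_Icc]
      norm_num
      rw [ENNReal.ofReal_div_of_pos (by norm_num)]; simp
    have hmono : ∫ x in S, T.indicator (fun _ => ((1:ℝ)/4) ^ edgeCount B) x ≤ g 1 := by
      refine setIntegral_mono_on
        ((integrableOn_const hSfin.ne).indicator hTm) (hIntF 1) hS ?_
      intro x hxS
      rw [Set.indicator_apply]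
      split_ifs with hxT
      · have hx : ∀ i, x i ∈ Set.Icc (1/2:ℝ) 1 := by
          rw [hTdef, Set.mem_univ_pi] at hxT
          exact hxT
        have heq : Fint B 1 x = ((1:ℝ)/4) ^ edgeCount B := by
          unfold Fint
          rw [projI_eq h1mem]
          have hfacs : ∀ p : β × β, (if B p.1 p.2 then Wlam 1 (x p.1) (x p.2) else 1)
              = (if B p.1 p.2 then (1:ℝ)/4 else 1) := by
            intro p
            split_ifs with hp
            · unfold Wlam
              have hc1 : ¬ (x p.1 ∈ Set.Icc (1/4:ℝ) (1/2) ∧ x p.2 ∈ Set.Icc (0:ℝ) (1/4)) := by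
                rintro ⟨-, hb⟩
                have h1 := (hx p.2).1
                have h2 := hb.2
                linarith
              rw [if_neg hc1, if_pos ⟨hx p.1, hx p.2⟩]
            · rfl
          rw [Finset.prod_congr rfl (fun p _ => hfacs p)]
          rw [← Finset.prod_filter, Finset.prod_const]
          congr 1
          unfold edgeCount
          rw [Nat.card_eq_fintype_card, Fintype.card_subtype]
        rw [heq]
      · exact Fint_nonneg B 1 x
    refine le_trans ?_ hmono
    rw [setIntegral_indicator hTm, Set.inter_eq_self_of_subset_right hTsub,
      setIntegral_const, measureReal_def, hTvol]
    rw [← ENNReal.ofReal_pow (by norm_num), ENNReal.toReal_ofReal (by positivity)]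
    rw [smul_eq_mul]
    have hp1 : ((1:ℝ)/2) ^ (2 * edgeCount B) ≤ ((1:ℝ)/2) ^ Fintype.card β :=
      pow_le_pow_of_le_one (by norm_num) (by norm_num) hcard
    calc ((1:ℝ)/16) ^ edgeCount B
        = ((1:ℝ)/2) ^ (2 * edgeCount B) * ((1:ℝ)/4) ^ edgeCount B := by
          rw [pow_mul, ← mul_pow]; norm_num
      _ ≤ ((1:ℝ)/2) ^ Fintype.card β * ((1:ℝ)/4) ^ edgeCount B :=
          mul_le_mul_of_nonneg_right hp1 (by positivity)
  -- intermediate value theorem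
  have htar : ((1:ℝ)/16) ^ edgeCount B ∈ Set.Icc (g 0) (g 1) :=
    ⟨by rw [hg0]; positivity, hg1⟩
  obtain ⟨l, hlmem, hgl⟩ := intermediate_value_Icc zero_le_one hgcont.continuousOn htar
  have hgd : graphonDensity B (Wlam l) = g l := by
    rw [hgdef]
    beta_reduce
    unfold graphonDensity Fint
    rw [projI_eq hlmem, hSdef]
  refine ⟨l, hlmem, ?_, ?_⟩
  · rw [hgd, hgl]
  · rw [K2_density l]
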